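/- Let 0 = t_0 < t_1 < ... < t_N = T - δ be a partition with δ < 1 ≤ T, satisfying t_{k+1} - t_k ≤ c(T - t_{k+1}) for all k, and set s_k = T - t_k, λ_k = Cd / min(1, s_k). Then Σ_{k=1}^N λ_k (t_k - t_{k-1}) ≤ C' d (T + log(1/δ)) for a constant C' depending only on c and C. -/
import Mathlib


open Real

/-- The total uniformization intensity `Σ λ_k (t_k - t_{k-1})` is bounded by
`C' d (T + log(1/δ))`, for a constant `C'` depending only on `c` and `C`. -/
theorem total_intensity_bound (c C : ℝ) (hc : 0 < c) (hC : 0 < C) :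
    ∃ C' > 0, ∀ (d : ℕ) (_hd : 1 ≤ d) (N : ℕ) (t : ℕ → ℝ) (T δ : ℝ),
      0 < δ → δ < 1 → 1 ≤ T →
      t 0 = 0 → t N = T - δ →
      (∀ k < N, t k < t (k + 1)) →
      (∀ k < N, t (k + 1) - t k ≤ c * (T - t (k + 1))) →
      ∑ k ∈ Finset.range N,
          (C * d / min 1 (T - t (k + 1))) * (t (k + 1) - t k)
        ≤ C' * d * (T + Real.log (1 / δ)) := by
  refine ⟨C * (2 + c), by positivity, ?_⟩
  intro d hd N t T δ hδ hδ1 hT h0 hN hlt hstep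
  have hd1 : (1:ℝ) ≤ d := by exact_mod_cast hd
  have hT0 : (0:ℝ) < T := lt_of_lt_of_le one_pos hT
  -- monotonicity of t up to N
  have mono : ∀ n ≤ N, ∀ m ≤ n, t m ≤ t n := by
    intro n hn
    induction n with
    | zero => intro m hm; simp [Nat.le_zero.mp hm]
    | succ n ih =>
      intro m hm
      rcases Nat.lt_succ_iff_lt_or_eq.mp (Nat.lt_succ_of_le hm) with h | h
      · have h1 : t m ≤ t n := ih (le_trans (Nat.le_succ n) hn) m (Nat.lt_succ_iff.mp h)
        exact le_trans h1 (le_of_lt (hlt n (lt_of_lt_of_le (Nat.lt_succ_self n) hn)))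
      · exact le_of_eq (by rw [h])
  have hsδ : ∀ k < N, δ ≤ T - t (k + 1) := by
    intro k hk
    have : t (k + 1) ≤ t N := mono N le_rfl (k + 1) hk
    have := hN ▸ this
    linarith
  set f : ℕ → ℝ := fun k => C * d * (T - t k) + C * d * (1 + c) * Real.log (T - t k)
    with hf
  have hterm : ∀ k ∈ Finset.range N,
      (C * d / min 1 (T - t (k + 1))) * (t (k + 1) - t k) ≤ f k - f (k + 1) := by
    intro k hk
    rw [Finset.mem_range] at hk
    set a := T - t k with ha
    set b := T - t (k + 1) with hb
    have hab : b < a := by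
      have := hlt k hk
      simp only [ha, hb]; linarith
    have hb0 : 0 < b := lt_of_lt_of_le hδ (hsδ k hk)
    have ha0 : 0 < a := lt_trans hb0 hab
    have hstep' : a - b ≤ c * b := by
      have := hstep k hk
      simp only [ha, hb]; linarith
    have htk : t (k + 1) - t k = a - b := by simp only [ha, hb]; ring
    have hCd : (0:ℝ) < C * d := by positivity
    have hlogle : Real.log b ≤ Real.log a := Real.log_le_log hb0 hab.le
    rw [htk]
    simp only [hf]
    rcases le_or_gt 1 b with h1b | h1b
    · rw [min_eq_left h1b]
      nlinarith [mul_nonneg (mul_nonneg hCd.le (by linarith : (0:ℝ) ≤ 1 + c))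
        (sub_nonneg.mpr hlogle)]
    · rw [min_eq_right h1b.le]
      -- key inequality: (a-b)/b ≤ (1+c) * (log a - log b)
      have hlog : Real.log b - Real.log a ≤ b / a - 1 := by
        have := Real.log_le_sub_one_of_pos (show 0 < b / a by positivity)
        rwa [Real.log_div hb0.ne' ha0.ne'] at this
      have h2 : (a - b) / a ≤ Real.log a - Real.log b := by
        have : (a - b) / a = 1 - b / a := by field_simp
        rw [this]; linarith
      have h3 : (a - b) / b ≤ (1 + c) * ((a - b) / a) := by
        rw [div_le_iff₀ hb0]
        have h4 : (1 + c) * ((a - b) / a) * b = (1 + c) * (a - b) * b / a := by ring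
        rw [h4, le_div_iff₀ ha0]
        nlinarith [sub_nonneg.mpr hab.le]
      have h5 : C * d / b * (a - b) = C * d * ((a - b) / b) := by ring
      rw [h5]
      have h6 : C * d * ((a - b) / b) ≤ C * d * ((1 + c) * (Real.log a - Real.log b)) := by
        apply mul_le_mul_of_nonneg_left _ hCd.le
        calc (a - b) / b ≤ (1 + c) * ((a - b) / a) := h3
          _ ≤ (1 + c) * (Real.log a - Real.log b) :=
            mul_le_mul_of_nonneg_left h2 (by linarith)
      nlinarith [mul_nonneg hCd.le (sub_nonneg.mpr hab.le)]
  have hsum : ∑ k ∈ Finset.range N,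
      (C * d / min 1 (T - t (k + 1))) * (t (k + 1) - t k)
      ≤ ∑ k ∈ Finset.range N, (f k - f (k + 1)) := Finset.sum_le_sum hterm
  rw [Finset.sum_range_sub' f N] at hsum
  have hf0 : f 0 = C * d * T + C * d * (1 + c) * Real.log T := by
    simp [hf, h0]
  have hfN : f N = C * d * δ + C * d * (1 + c) * Real.log δ := by
    simp only [hf, hN]
    ring_nf
  have hlogT : Real.log T ≤ T - 1 := Real.log_le_sub_one_of_pos hT0
  have hlogδ : Real.log δ < 0 := Real.log_neg hδ hδ1
  have hlog1δ : Real.log (1 / δ) = -Real.log δ := by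
    rw [one_div, Real.log_inv]
  rw [hf0, hfN] at hsum
  rw [hlog1δ]
  nlinarith [mul_pos hC (by linarith : (0:ℝ) < (d:ℝ)),
    mul_nonneg (mul_nonneg hC.le (by linarith : (0:ℝ) ≤ (d:ℝ))) (by linarith : (0:ℝ) ≤ 1 + c)]
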